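/- For open sets J, K ⊆ ℝ and settling names ρ, σ, τ: if J ⊩₃ ρ = σ and K ⊩₃ ρ ∈ τ, then (J ∩ K) ⊩₃ σ ∈ τ. -/

import Mathlib

/-- Settling names over ℝ: a family of pairs of a settling name and an open set of
reals, together with a family of pairs of a settling name and a real. -/
inductive SName : Type 1
  | mk (ι : Type) (elem : ι → SName) (cond : ι → Set ℝ) (hopen : ∀ i, IsOpen (cond i))
       (κ : Type) (relem : κ → SName) (rcond : κ → ℝ) : SName

namespace Ordinal

/-- Natural addition of ordinals (the Hessenberg sum), as in the older Mathlib. -/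
noncomputable def nadd : Ordinal.{0} → Ordinal.{0} → Ordinal.{0}
  | a, b =>
    max (blsub.{0, 0} a fun a' _ => nadd a' b) (blsub.{0, 0} b fun b' _ => nadd a b')
termination_by a b => (a, b)

theorem nadd_def (a b : Ordinal.{0}) :
    nadd a b = max (blsub.{0, 0} a fun a' _ => nadd a' b) (blsub.{0, 0} b fun b' _ => nadd a b') := by
  rw [nadd]

theorem nadd_comm (a b : Ordinal.{0}) : nadd a b = nadd b a := by
  rw [nadd_def, nadd_def, max_comm]
  congr <;> ext x hx <;> apply nadd_comm
termination_by (a, b)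

theorem nadd_lt_nadd_left {b c : Ordinal.{0}} (h : b < c) (a : Ordinal.{0}) :
    nadd a b < nadd a c := by
  rw [nadd_def a c]
  exact lt_max_of_lt_right (lt_blsub (fun b' _ => nadd a b') b h)

theorem nadd_lt_nadd_right {b c : Ordinal.{0}} (h : b < c) (a : Ordinal.{0}) :
    nadd b a < nadd c a := by
  rw [nadd_def c a]
  exact lt_max_of_lt_left (lt_blsub (fun b' _ => nadd b' a) b h)

end Ordinal

namespace NaturalOps

scoped infixl:65 " ♯ " => Ordinal.nadd

end NaturalOps

namespace SName

/-- Index type of the open-set pairs. -/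
def idx : SName → Type
  | mk ι _ _ _ _ _ _ => ι

/-- Name component of an open-set pair. -/
def elem : (σ : SName) → σ.idx → SName
  | mk _ e _ _ _ _ _ => e

/-- Open-set component of an open-set pair. -/
def cond : (σ : SName) → σ.idx → Set ℝ
  | mk _ _ c _ _ _ _ => c

theorem cond_isOpen : ∀ (σ : SName) (i : σ.idx), IsOpen (σ.cond i)
  | mk _ _ _ h _ _ _ => h

/-- Index type of the real pairs. -/
def ridx : SName → Type
  | mk _ _ _ _ κ _ _ => κ

/-- Name component of a real pair. -/
def relem : (σ : SName) → σ.ridx → SName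
  | mk _ _ _ _ _ re _ => re

/-- Real component of a real pair. -/
def rcond : (σ : SName) → σ.ridx → ℝ
  | mk _ _ _ _ _ _ rc => rc

/-- Hereditary extensional equality of settling names. -/
def equiv : SName → SName → Prop
  | mk _ e c _ _ re rc, mk _ e' c' _ _ re' rc' =>
    ((∀ i, ∃ i', equiv (e i) (e' i') ∧ c i = c' i') ∧
     (∀ i', ∃ i, equiv (e i) (e' i') ∧ c i = c' i')) ∧
    ((∀ h, ∃ h', equiv (re h) (re' h') ∧ rc h = rc' h') ∧
     (∀ h', ∃ h, equiv (re h) (re' h') ∧ rc h = rc' h'))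

/-- The settling σ^r of a settling name σ at a real r. -/
def settle : SName → ℝ → SName
  | mk ι e c _ κ re rc, r =>
    mk ({i : ι // r ∈ c i} ⊕ {h : κ // rc h = r})
      (Sum.elim (fun i => settle (e i.1) r) (fun h => settle (re h.1) r))
      (fun _ => Set.univ) (fun _ => isOpen_univ)
      Empty (fun h => h.elim) (fun h => h.elim)

/-- Rank of a settling name (over the open-set pairs), used for the recursive
definition of settling forcing. -/
noncomputable def rank : SName → Ordinal.{0}
  | mk _ e _ _ _ _ _ => Ordinal.lsub fun i => rank (e i)

theorem rank_elem_lt : ∀ (σ : SName) (i : σ.idx), (σ.elem i).rank < σ.rank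
  | mk ι e c h κ re rc, i => by
    simpa [rank, elem] using Ordinal.lt_lsub (fun i => rank (e i)) i

open NaturalOps

mutual
  /-- `seq σ τ J` means `J ⊩₃ σ = τ`. -/
  def seq (σ τ : SName) (J : Set ℝ) : Prop :=
    (∀ i : σ.idx, smem (σ.elem i) τ (J ∩ σ.cond i)) ∧
    (∀ j : τ.idx, smem (τ.elem j) σ (J ∩ τ.cond j)) ∧
    (∀ r ∈ J, equiv (σ.settle r) (τ.settle r))
  termination_by σ.rank ♯ τ.rank
  decreasing_by
    · exact Ordinal.nadd_lt_nadd_right (rank_elem_lt σ i) τ.rank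
    · rw [Ordinal.nadd_comm]
      exact Ordinal.nadd_lt_nadd_left (rank_elem_lt τ j) σ.rank

  /-- `smem σ τ J` means `J ⊩₃ σ ∈ τ`. -/
  def smem (σ τ : SName) (J : Set ℝ) : Prop :=
    (∀ r ∈ J, ∃ (j : τ.idx) (J' : Set ℝ), IsOpen J' ∧ J' ⊆ J ∧ r ∈ J' ∩ τ.cond j ∧
      seq σ (τ.elem j) (J' ∩ τ.cond j)) ∧
    (∀ r ∈ J, ∃ k : (τ.settle r).idx,
      (τ.settle r).cond k = Set.univ ∧ equiv ((τ.settle r).elem k) (σ.settle r))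
  termination_by σ.rank ♯ τ.rank
  decreasing_by
    exact Ordinal.nadd_lt_nadd_left (rank_elem_lt τ j) σ.rank
end

end SName


/-!
Forced equality is an equivalence on names over any open set: it is monotone under shrinking
to open subsets, symmetric by definition, and transitive together with the congruence
`J ⊩₃ σ ∈ τ, J ⊩₃ τ = τ' ⇒ J ⊩₃ σ ∈ τ'`, the two being proved by one well-founded recursion.
The theorem then follows pointwise: for r ∈ J ∩ K, a witness `(J' ∩ Jᵢ) ⊩₃ ρ = τᵢ` becomes
`(J ∩ J' ∩ Jᵢ) ⊩₃ σ = τᵢ` by symmetry and transitivity, and the settled part transfers along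
`ρ^r ≡ σ^r`.
-/

namespace SName

open Set

theorem equiv.symm : ∀ {σ τ : SName}, equiv σ τ → equiv τ σ
  | mk _ _ _ _ _ _ _, mk _ _ _ _ _ _ _, ⟨⟨h₁, h₂⟩, h₃, h₄⟩ =>
    ⟨⟨fun i' => let ⟨i, he, hc⟩ := h₂ i'; ⟨i, he.symm, hc.symm⟩,
      fun i => let ⟨i', he, hc⟩ := h₁ i; ⟨i', he.symm, hc.symm⟩⟩,
     fun k' => let ⟨k, he, hc⟩ := h₄ k'; ⟨k, he.symm, hc.symm⟩,
     fun k => let ⟨k', he, hc⟩ := h₃ k; ⟨k', he.symm, hc.symm⟩⟩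

theorem equiv.trans : ∀ {ρ σ τ : SName}, equiv ρ σ → equiv σ τ → equiv ρ τ
  | mk _ _ _ _ _ _ _, mk _ _ _ _ _ _ _, mk _ _ _ _ _ _ _,
    ⟨⟨h₁, h₂⟩, h₃, h₄⟩, ⟨⟨g₁, g₂⟩, g₃, g₄⟩ =>
    ⟨⟨fun i => let ⟨j, he, hc⟩ := h₁ i; let ⟨k, he', hc'⟩ := g₁ j
        ⟨k, he.trans he', hc.trans hc'⟩,
      fun k => let ⟨j, he', hc'⟩ := g₂ k; let ⟨i, he, hc⟩ := h₂ j
        ⟨i, he.trans he', hc.trans hc'⟩⟩,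
     fun i => let ⟨j, he, hc⟩ := h₃ i; let ⟨k, he', hc'⟩ := g₃ j
        ⟨k, he.trans he', hc.trans hc'⟩,
     fun k => let ⟨j, he', hc'⟩ := g₄ k; let ⟨i, he, hc⟩ := h₄ j
        ⟨i, he.trans he', hc.trans hc'⟩⟩

theorem equiv.exists_elem : ∀ {σ τ : SName}, equiv σ τ →
    ∀ i : σ.idx, ∃ i' : τ.idx, equiv (σ.elem i) (τ.elem i') ∧ σ.cond i = τ.cond i'
  | mk _ _ _ _ _ _ _, mk _ _ _ _ _ _ _, h => h.1.1

open NaturalOps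

mutual
  theorem seq.mono {σ τ : SName} {J J' : Set ℝ} (h : seq σ τ J) (hJ' : IsOpen J')
      (hJ'J : J' ⊆ J) : seq σ τ J' := by
    rw [seq] at h ⊢
    obtain ⟨hσ, hτ, hsettle⟩ := h
    exact ⟨fun i => (hσ i).mono (hJ'.inter (σ.cond_isOpen i)) (inter_subset_inter_left _ hJ'J),
      fun j => (hτ j).mono (hJ'.inter (τ.cond_isOpen j)) (inter_subset_inter_left _ hJ'J),
      fun r hr => hsettle r (hJ'J hr)⟩
  termination_by σ.rank ♯ τ.rank
  decreasing_by
    · exact Ordinal.nadd_lt_nadd_right (rank_elem_lt σ i) τ.rank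
    · rw [Ordinal.nadd_comm]
      exact Ordinal.nadd_lt_nadd_left (rank_elem_lt τ j) σ.rank

  theorem smem.mono {σ τ : SName} {J J' : Set ℝ} (h : smem σ τ J) (hJ' : IsOpen J')
      (hJ'J : J' ⊆ J) : smem σ τ J' := by
    rw [smem] at h ⊢
    obtain ⟨hwit, hsettle⟩ := h
    refine ⟨fun r hr => ?_, fun r hr => hsettle r (hJ'J hr)⟩
    obtain ⟨j, L, hL, hLJ, ⟨hrL, hrj⟩, hseq⟩ := hwit r (hJ'J hr)
    exact ⟨j, L ∩ J', hL.inter hJ', inter_subset_right, ⟨⟨hrL, hr⟩, hrj⟩,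
      hseq.mono ((hL.inter hJ').inter (τ.cond_isOpen j))
        (inter_subset_inter_left _ inter_subset_left)⟩
  termination_by σ.rank ♯ τ.rank
  decreasing_by
    exact Ordinal.nadd_lt_nadd_left (rank_elem_lt τ j) σ.rank
end

theorem seq.symm {σ τ : SName} {J : Set ℝ} (h : seq σ τ J) : seq τ σ J := by
  rw [seq] at h ⊢
  exact ⟨h.2.1, h.1, fun r hr => (h.2.2 r hr).symm⟩

mutual
  theorem seq.trans {ρ σ τ : SName} {J : Set ℝ} (hJ : IsOpen J)
      (hρσ : seq ρ σ J) (hστ : seq σ τ J) : seq ρ τ J := by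
    obtain ⟨hρ, -, hρσ_settle⟩ := (seq.eq_1 ρ σ J).mp hρσ
    obtain ⟨-, hτ, hστ_settle⟩ := (seq.eq_1 σ τ J).mp hστ
    rw [seq]
    refine ⟨fun i => ?_, fun j => ?_, fun r hr => (hρσ_settle r hr).trans (hστ_settle r hr)⟩
    · have hJi := hJ.inter (ρ.cond_isOpen i)
      exact (hρ i).congr_right (hστ.mono hJi inter_subset_left)
    · have hJj := hJ.inter (τ.cond_isOpen j)
      exact (hτ j).congr_right (hρσ.symm.mono hJj inter_subset_left)
  -- The measure is symmetric in ρ and τ, whose roles swap in the second recursive call.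
  termination_by (ρ.rank ♯ τ.rank) ♯ σ.rank
  decreasing_by
    · exact Ordinal.nadd_lt_nadd_right (Ordinal.nadd_lt_nadd_right (rank_elem_lt ρ i) _) _
    · rw [Ordinal.nadd_comm (τ.elem j).rank]
      exact Ordinal.nadd_lt_nadd_right (Ordinal.nadd_lt_nadd_left (rank_elem_lt τ j) _) _

  theorem smem.congr_right {σ τ τ' : SName} {J : Set ℝ} (h : smem σ τ J)
      (hττ' : seq τ τ' J) : smem σ τ' J := by
    obtain ⟨hτ, -, hττ'_settle⟩ := (seq.eq_1 τ τ' J).mp hττ'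
    rw [smem] at h ⊢
    obtain ⟨hwit, hsettle⟩ := h
    refine ⟨fun r hr => ?_, fun r hr => ?_⟩
    · obtain ⟨j, L, hL, hLJ, ⟨hrL, hrj⟩, hseq⟩ := hwit r hr
      obtain ⟨j', L', hL', hL'J, ⟨hrL', hrj'⟩, hseq'⟩ :=
        ((smem.eq_1 _ _ _).mp (hτ j)).1 r ⟨hLJ hrL, hrj⟩
      have hopen : IsOpen ((L ∩ L') ∩ τ'.cond j') := (hL.inter hL').inter (τ'.cond_isOpen j')
      refine ⟨j', L ∩ L', hL.inter hL', inter_subset_left.trans hLJ, ⟨⟨hrL, hrL'⟩, hrj'⟩, ?_⟩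
      exact (hseq.mono hopen fun x hx => ⟨hx.1.1, (hL'J hx.1.2).2⟩).trans hopen
        (hseq'.mono hopen (inter_subset_inter_left _ inter_subset_right))
    · obtain ⟨k, hk, he⟩ := hsettle r hr
      obtain ⟨k', he', hc⟩ := (hττ'_settle r hr).exists_elem k
      exact ⟨k', hc.symm.trans hk, he'.symm.trans he⟩
  termination_by (σ.rank ♯ τ'.rank) ♯ τ.rank
  decreasing_by
    exact (Ordinal.nadd_lt_nadd_left (rank_elem_lt τ j) _).trans
      (Ordinal.nadd_lt_nadd_right (Ordinal.nadd_lt_nadd_left (rank_elem_lt τ' j') _) _)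
end

end SName

theorem sforces_mem_congr_left (J K : Set ℝ) (hJ : IsOpen J) (hK : IsOpen K) (ρ σ τ : SName)
    (h₁ : SName.seq ρ σ J) (h₂ : SName.smem ρ τ K) : SName.smem σ τ (J ∩ K) := by
  obtain ⟨-, -, hρσ_settle⟩ := (SName.seq.eq_1 ρ σ J).mp h₁
  obtain ⟨hwit, hsettle⟩ := (SName.smem.eq_1 ρ τ K).mp h₂
  rw [SName.smem]
  refine ⟨fun r ⟨hrJ, hrK⟩ => ?_, fun r ⟨hrJ, hrK⟩ => ?_⟩
  · obtain ⟨j, L, hL, hLK, ⟨hrL, hrj⟩, hseq⟩ := hwit r hrK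
    have hopen : IsOpen ((J ∩ L) ∩ τ.cond j) := (hJ.inter hL).inter (τ.cond_isOpen j)
    refine ⟨j, J ∩ L, hJ.inter hL, Set.inter_subset_inter_right J hLK, ⟨⟨hrJ, hrL⟩, hrj⟩, ?_⟩
    exact (h₁.mono hopen fun x hx => hx.1.1).symm.trans hopen
      (hseq.mono hopen (Set.inter_subset_inter_left _ Set.inter_subset_right))
  · obtain ⟨k, hk, he⟩ := hsettle r hrK
    exact ⟨k, hk, he.trans (hρσ_settle r hrJ)⟩
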